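/- Let ρ₁, ρ₂ ∈ (-1,0) and p₁ > p₂ > 0. Define g(t) = p₁(1 - 2Φ(√((1-ρ₁)/(1+ρ₁))·t)) - p₂·Φ(-√((1+ρ₂)/(1-ρ₂))·t) for t < 0, where Φ is the standard normal CDF. Then g has exactly one root in (-∞, 0). -/

import Mathlib

/-!
With `a = √((1-ρ₁)/(1+ρ₁)) > 1 > b = √((1+ρ₂)/(1-ρ₂)) > 0`,
`g'(t) = p₂ b φ(bt) - 2 p₁ a φ(at)`, and since `a > b` the ratio of the two terms is
`exp((a² - b²) t² / 2)` up to a constant, which is monotone in `t²`. So `g` increases up to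
some `T` and then decreases on `[T, 0]`. As `g → p₁ - p₂ > 0` at `-∞`, `g` is positive on
`(-∞, T]`; since `g(0) = -p₂/2 < 0`, it has exactly one root, which lies in `(T, 0)`.
-/

/-- Standard normal CDF. -/
noncomputable def stdNormalCDF (t : ℝ) : ℝ :=
  ∫ x in Set.Iic t, (1 / Real.sqrt (2 * Real.pi)) * Real.exp (-x ^ 2 / 2)

open Real Set Filter MeasureTheory Topology ProbabilityTheory

lemma gaussianPDFReal_zero_neg (v : NNReal) (x : ℝ) :
    gaussianPDFReal 0 v (-x) = gaussianPDFReal 0 v x := by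
  simp [gaussianPDFReal]

lemma continuous_gaussianPDFReal (μ : ℝ) (v : NNReal) : Continuous (gaussianPDFReal μ v) := by
  unfold gaussianPDFReal; fun_prop

lemma stdNormalCDF_eq_integral (t : ℝ) :
    stdNormalCDF t = ∫ x in Iic t, gaussianPDFReal 0 1 x := by
  simp [stdNormalCDF, gaussianPDFReal]

lemma stdNormalCDF_eq_cdf : stdNormalCDF = cdf (gaussianReal 0 1) := by
  ext t
  rw [cdf_eq_real, measureReal_def, gaussianReal_apply_eq_integral _ one_ne_zero,
    ENNReal.toReal_ofReal (setIntegral_nonneg measurableSet_Iic fun x _ ↦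
      gaussianPDFReal_nonneg 0 1 x), stdNormalCDF_eq_integral]

lemma tendsto_stdNormalCDF_atBot : Tendsto stdNormalCDF atBot (𝓝 0) :=
  stdNormalCDF_eq_cdf ▸ tendsto_cdf_atBot _

lemma tendsto_stdNormalCDF_atTop : Tendsto stdNormalCDF atTop (𝓝 1) :=
  stdNormalCDF_eq_cdf ▸ tendsto_cdf_atTop _

lemma stdNormalCDF_zero : stdNormalCDF 0 = 1 / 2 := by
  have hint := integrable_gaussianPDFReal 0 1
  have hsymm : ∫ x in Ioi 0, gaussianPDFReal 0 1 x = ∫ x in Iic 0, gaussianPDFReal 0 1 x := by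
    simpa [gaussianPDFReal_zero_neg] using integral_comp_neg_Ioi 0 (gaussianPDFReal 0 1)
  have htotal := intervalIntegral.integral_Iic_add_Ioi (b := 0) hint.integrableOn hint.integrableOn
  rw [integral_gaussianPDFReal_eq_one 0 one_ne_zero, hsymm] at htotal
  rw [stdNormalCDF_eq_integral]
  linarith

lemma hasDerivAt_stdNormalCDF (t : ℝ) : HasDerivAt stdNormalCDF (gaussianPDFReal 0 1 t) t := by
  have hcont := continuous_gaussianPDFReal 0 1
  have hint := integrable_gaussianPDFReal 0 1
  have hsplit : stdNormalCDF = fun u ↦ stdNormalCDF 0 + ∫ x in 0..u, gaussianPDFReal 0 1 x := by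
    ext u
    rw [stdNormalCDF_eq_integral, stdNormalCDF_eq_integral,
      ← intervalIntegral.integral_Iic_sub_Iic hint.integrableOn hint.integrableOn]
    ring
  rw [hsplit]
  exact (intervalIntegral.integral_hasDerivAt_right hint.intervalIntegrable
    (hcont.stronglyMeasurableAtFilter _ _) hcont.continuousAt).const_add _

lemma mul_gaussianPDFReal_lt_mul_iff {c d : ℝ} (hc : 0 < c) (hd : 0 < d) (x y : ℝ) :
    c * gaussianPDFReal 0 1 x < d * gaussianPDFReal 0 1 y ↔
      log (c / d) < (x ^ 2 - y ^ 2) / 2 := by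
  have hy : gaussianPDFReal 0 1 y = exp ((x ^ 2 - y ^ 2) / 2) * gaussianPDFReal 0 1 x := by
    simp only [gaussianPDFReal, sub_zero, NNReal.coe_one, mul_one]
    rw [mul_left_comm, ← exp_add]
    ring_nf
  rw [hy, ← mul_assoc, mul_lt_mul_iff_left₀ (gaussianPDFReal_pos 0 1 x one_ne_zero),
    log_lt_iff_lt_exp (div_pos hc hd), div_lt_iff₀' hd]

lemma existsUnique_root_of_strictMonoOn_Iic_of_strictAntiOn_Icc {f : ℝ → ℝ} {T c s : ℝ}
    (hf : Continuous f) (hmono : StrictMonoOn f (Iic T)) (hanti : StrictAntiOn f (Icc T s))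
    (hlim : Tendsto f atBot (𝓝 c)) (hc : 0 < c) (hs : f s < 0) :
    ∃! t, t < s ∧ f t = 0 := by
  have hle : ∀ t ≤ T, c ≤ f t := fun t ht ↦ le_of_tendsto hlim <| by
    filter_upwards [eventually_le_atBot t] with u hu
    exact hmono.monotoneOn (hu.trans ht) ht hu
  have hT : T < s := lt_of_not_ge fun hsT ↦ by linarith [hle s hsT]
  obtain ⟨t₀, ⟨hTt₀, ht₀s⟩, hft₀⟩ : 0 ∈ f '' Ioo T s :=
    intermediate_value_Ioo' hT.le hf.continuousOn ⟨hs, by linarith [hle T le_rfl]⟩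
  refine ⟨t₀, ⟨ht₀s, hft₀⟩, fun t ⟨hts, hft⟩ ↦ ?_⟩
  have hTt : T ≤ t := le_of_not_gt fun htT ↦ by linarith [hle t htT.le]
  exact hanti.injOn ⟨hTt, hts.le⟩ ⟨hTt₀.le, ht₀s.le⟩ (hft.trans hft₀.symm)

noncomputable def normalCDFGap (p₁ p₂ a b t : ℝ) : ℝ :=
  p₁ * (1 - 2 * stdNormalCDF (a * t)) - p₂ * stdNormalCDF (-(b * t))

section normalCDFGap

variable {p₁ p₂ a b : ℝ}

lemma hasDerivAt_normalCDFGap (t : ℝ) :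
    HasDerivAt (normalCDFGap p₁ p₂ a b)
      (p₂ * b * gaussianPDFReal 0 1 (b * t) - 2 * p₁ * a * gaussianPDFReal 0 1 (a * t)) t := by
  have ha := (hasDerivAt_stdNormalCDF (a * t)).comp t ((hasDerivAt_id t).const_mul a)
  have hb := (hasDerivAt_stdNormalCDF (-(b * t))).comp t ((hasDerivAt_id t).const_mul b).neg
  exact ((((ha.const_mul 2).const_sub 1).const_mul p₁).sub (hb.const_mul p₂)).congr_deriv
    (by rw [gaussianPDFReal_zero_neg]; ring)

lemma continuous_normalCDFGap : Continuous (normalCDFGap p₁ p₂ a b) :=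
  continuous_iff_continuousAt.2 fun t ↦ (hasDerivAt_normalCDFGap t).continuousAt

lemma normalCDFGap_zero : normalCDFGap p₁ p₂ a b 0 = -(p₂ / 2) := by
  simp only [normalCDFGap, mul_zero, neg_zero, stdNormalCDF_zero]
  ring

lemma tendsto_normalCDFGap_atBot (ha : 0 < a) (hb : 0 < b) :
    Tendsto (normalCDFGap p₁ p₂ a b) atBot (𝓝 (p₁ - p₂)) := by
  have hΦa : Tendsto (fun t ↦ stdNormalCDF (a * t)) atBot (𝓝 0) :=
    tendsto_stdNormalCDF_atBot.comp (tendsto_id.const_mul_atBot ha)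
  have hΦb : Tendsto (fun t ↦ stdNormalCDF (-(b * t))) atBot (𝓝 1) :=
    tendsto_stdNormalCDF_atTop.comp
      (tendsto_neg_atBot_atTop.comp (tendsto_id.const_mul_atBot hb))
  have h := ((hΦa.const_mul 2).const_sub 1 |>.const_mul p₁).sub (hΦb.const_mul p₂)
  rwa [mul_zero, sub_zero, mul_one, mul_one] at h

lemma exists_strictMonoOn_Iic_strictAntiOn_Icc_normalCDFGap (hp₁ : 0 < p₁) (hp₂ : 0 < p₂)
    (hb : 0 < b) (hba : b < a) :
    ∃ T, StrictMonoOn (normalCDFGap p₁ p₂ a b) (Iic T) ∧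
      StrictAntiOn (normalCDFGap p₁ p₂ a b) (Icc T 0) := by
  have ha : 0 < a := hb.trans hba
  have hD : 0 < a ^ 2 - b ^ 2 := by nlinarith
  set L := 2 * log (2 * p₁ * a / (p₂ * b)) / (a ^ 2 - b ^ 2)
  have hderiv_pos_iff : ∀ t, L < t ^ 2 ↔ 2 * p₁ * a * gaussianPDFReal 0 1 (a * t) <
      p₂ * b * gaussianPDFReal 0 1 (b * t) := fun t ↦ by
    rw [mul_gaussianPDFReal_lt_mul_iff (by positivity) (by positivity), div_lt_iff₀ hD]
    constructor <;> intro h <;> linarith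
  have hderiv_neg_iff : ∀ t, t ^ 2 < L ↔ p₂ * b * gaussianPDFReal 0 1 (b * t) <
      2 * p₁ * a * gaussianPDFReal 0 1 (a * t) := fun t ↦ by
    rw [mul_gaussianPDFReal_lt_mul_iff (by positivity) (by positivity), lt_div_iff₀ hD,
      ← inv_div, log_inv]
    constructor <;> intro h <;> linarith
  refine ⟨-√L, ?_, ?_⟩
  · refine strictMonoOn_of_deriv_pos (convex_Iic _) continuous_normalCDFGap.continuousOn
      fun t ht ↦ ?_
    rw [interior_Iic, mem_Iio, lt_neg] at ht
    have hL : L < t ^ 2 := by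
      rw [← neg_sq]
      exact (sqrt_lt' ((sqrt_nonneg L).trans_lt ht)).1 ht
    rw [(hasDerivAt_normalCDFGap t).deriv]
    linarith [(hderiv_pos_iff t).1 hL]
  · refine strictAntiOn_of_deriv_neg (convex_Icc _ _) continuous_normalCDFGap.continuousOn
      fun t ht ↦ ?_
    rw [interior_Icc] at ht
    have hL : t ^ 2 < L := by
      rw [← neg_sq]
      exact (lt_sqrt (neg_nonneg.2 ht.2.le)).1 (by linarith [ht.1])
    rw [(hasDerivAt_normalCDFGap t).deriv]
    linarith [(hderiv_neg_iff t).1 hL]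

end normalCDFGap

/-- For `ρ₁, ρ₂ ∈ (-1,0)` and `p₁ > p₂ > 0`, the function
`g(t) = p₁(1 - 2Φ(√((1-ρ₁)/(1+ρ₁))·t)) - p₂·Φ(-√((1+ρ₂)/(1-ρ₂))·t)`
has exactly one root in `(-∞, 0)`. -/
theorem unique_root (ρ₁ ρ₂ p₁ p₂ : ℝ) (hρ₁ : ρ₁ ∈ Set.Ioo (-1 : ℝ) 0)
    (hρ₂ : ρ₂ ∈ Set.Ioo (-1 : ℝ) 0) (hp : p₂ < p₁) (hp₂ : 0 < p₂) :
    ∃! t : ℝ, t < 0 ∧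
      p₁ * (1 - 2 * stdNormalCDF (Real.sqrt ((1 - ρ₁) / (1 + ρ₁)) * t)) -
        p₂ * stdNormalCDF (-(Real.sqrt ((1 + ρ₂) / (1 - ρ₂)) * t)) = 0 := by
  obtain ⟨hρ₁l, hρ₁r⟩ := hρ₁
  obtain ⟨hρ₂l, hρ₂r⟩ := hρ₂
  have hb : 0 < √((1 + ρ₂) / (1 - ρ₂)) := sqrt_pos.2 (div_pos (by linarith) (by linarith))
  have hb1 : √((1 + ρ₂) / (1 - ρ₂)) < 1 := by
    rw [sqrt_lt' one_pos, one_pow, div_lt_one (by linarith)]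
    linarith
  have ha1 : 1 < √((1 - ρ₁) / (1 + ρ₁)) := by
    rw [lt_sqrt zero_le_one, one_pow, lt_div_iff₀ (by linarith)]
    linarith
  obtain ⟨T, hmono, hanti⟩ := exists_strictMonoOn_Iic_strictAntiOn_Icc_normalCDFGap
    (hp₂.trans hp) hp₂ hb (hb1.trans ha1)
  refine existsUnique_root_of_strictMonoOn_Iic_of_strictAntiOn_Icc continuous_normalCDFGap
    hmono hanti (tendsto_normalCDFGap_atBot (one_pos.trans ha1) hb) (sub_pos.2 hp)
    (normalCDFGap_zero.trans_lt (by linarith))
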